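/- arXiv:1910.13294 — 3 statements merged into one kernel-verified Lean document; each statement's English description precedes it below -/
import Mathlib

section
/- Let α be a finite type and let w, q : α → ℝ be probability mass functions such that q a > 0 whenever w a > 0. Then -∑_{a : w a > 0} w a * Real.log (q a) = -∑_{a : w a > 0} w a * Real.log (w a) if and only if w = q. -/
open scoped Classical

/-- Cross entropy of a pmf `w` against a pmf `q` equals the entropy of `w`
iff `w = q`. -/
theorem cross_entropy_eq_entropy_iff {α : Type*} [Fintype α]
    (w q : α → ℝ)
    (hw0 : ∀ a, 0 ≤ w a) (hw1 : ∑ a, w a = 1)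
    (hq0 : ∀ a, 0 ≤ q a) (hq1 : ∑ a, q a = 1)
    (hpos : ∀ a, 0 < w a → 0 < q a) :
    (-∑ a ∈ Finset.univ.filter (fun a => 0 < w a), w a * Real.log (q a) =
      -∑ a ∈ Finset.univ.filter (fun a => 0 < w a), w a * Real.log (w a)) ↔ w = q := by
  classical
  set S := Finset.univ.filter (fun a => 0 < w a) with hS
  have hwS : ∀ a ∈ S, 0 < w a := by intro a ha; simpa [hS] using ha
  have hwS' : ∀ a ∉ S, w a = 0 := by
    intro a ha
    by_contra hne
    exact ha (by simp [hS, lt_of_le_of_ne (hw0 a) (Ne.symm hne)])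
  have hsumwS : ∑ a ∈ S, w a = 1 := by
    rw [← hw1]
    exact (Finset.sum_subset (Finset.subset_univ S)
      (fun a _ ha => hwS' a ha))
  constructor
  · intro h
    have hzero : ∑ a ∈ S, w a * (Real.log (q a) - Real.log (w a)) = 0 := by
      have h' : ∑ a ∈ S, w a * Real.log (q a) =
          ∑ a ∈ S, w a * Real.log (w a) := by linarith [neg_injective h]
      simp [mul_sub, Finset.sum_sub_distrib, h']
    have hle : ∀ a ∈ S, w a * (Real.log (q a) - Real.log (w a)) ≤ q a - w a := by
      intro a ha
      have hw := hwS a ha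
      have hq := hpos a hw
      have hx : (0:ℝ) < q a / w a := div_pos hq hw
      have hlog : Real.log (q a / w a) ≤ q a / w a - 1 :=
        Real.log_le_sub_one_of_pos hx
      have := mul_le_mul_of_nonneg_left hlog hw.le
      calc w a * (Real.log (q a) - Real.log (w a))
          = w a * Real.log (q a / w a) := by rw [Real.log_div hq.ne' hw.ne']
        _ ≤ w a * (q a / w a - 1) := this
        _ = q a - w a := by field_simp
    have hSq : ∑ a ∈ S, q a ≤ 1 := by
      rw [← hq1]
      exact Finset.sum_le_sum_of_subset_of_nonneg (Finset.subset_univ S)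
        (fun a _ _ => hq0 a)
    have heqS : ∀ a ∈ S, w a = q a := by
      by_contra hne
      push_neg at hne
      obtain ⟨a, ha, hane⟩ := hne
      have hstrict : w a * (Real.log (q a) - Real.log (w a)) < q a - w a := by
        have hw := hwS a ha
        have hq := hpos a hw
        have hx : (0:ℝ) < q a / w a := div_pos hq hw
        have hx1 : q a / w a ≠ 1 := by
          intro h1
          exact hane (by field_simp at h1; linarith)
        have hlog : Real.log (q a / w a) < q a / w a - 1 :=
          Real.log_lt_sub_one_of_pos hx hx1
        have := mul_lt_mul_of_pos_left hlog hw
        calc w a * (Real.log (q a) - Real.log (w a))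
            = w a * Real.log (q a / w a) := by rw [Real.log_div hq.ne' hw.ne']
          _ < w a * (q a / w a - 1) := this
          _ = q a - w a := by field_simp
      have hsumlt : ∑ a ∈ S, w a * (Real.log (q a) - Real.log (w a)) <
          ∑ a ∈ S, (q a - w a) :=
        Finset.sum_lt_sum hle ⟨a, ha, hstrict⟩
      rw [hzero, Finset.sum_sub_distrib, hsumwS] at hsumlt
      linarith
    funext a
    by_cases ha : a ∈ S
    · exact heqS a ha
    · have hsumqS : ∑ a ∈ S, q a = 1 := by
        rw [← hsumwS]
        exact Finset.sum_congr rfl (fun b hb => (heqS b hb).symm)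
      have hrest : ∑ b ∈ Finset.univ \ S, q b = 0 := by
        have := Finset.sum_sdiff (Finset.subset_univ S) (f := q)
        rw [hsumqS, hq1] at this
        linarith
      have hq0' : q a = 0 := by
        have := (Finset.sum_eq_zero_iff_of_nonneg
          (fun b _ => hq0 b)).mp hrest a (by simp [ha])
        exact this
      rw [hwS' a ha, hq0']
  · rintro rfl; rfl
end

section
/- Let S, T, U be finite types, let p be a joint pmf on S × T with marginal p₁(x) = ∑_y p(x,y), let f : S → U, and let p_f be the pushforward joint pmf on U × T given by p_f(u,y) = ∑_{x : f x = u} p(x,y), with marginal (p_f)₁(u) = ∑_y p_f(u,y). Then H_{p_f}(Y | f(X)) = H_p(Y | X) if and only if for every x with p₁(x) > 0 and every y, p(x,y)/p₁(x) = p_f(f x, y)/(p_f)₁(f x), i.e., the conditional distribution of Y given X = x coincides with the conditional distribution of Y given f(X) = f x. -/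
open scoped Classical

/-- The pushforward joint pmf of `p : S × T → ℝ` along `f : S → U` in the first coordinate. -/
noncomputable def pushf {S T U : Type*} [Fintype S] (p : S × T → ℝ) (f : S → U) :
    U × T → ℝ :=
  fun uy => ∑ x ∈ Finset.univ.filter (fun x => f x = uy.1), p (x, uy.2)

/-- Conditional entropy `H(Y|A)` of a joint pmf `q` on `A × T`. -/
noncomputable def condEnt {A T : Type*} [Fintype A] [Fintype T] (q : A × T → ℝ) : ℝ :=
  -∑ ay ∈ Finset.univ.filter (fun ay : A × T => 0 < q ay),
      q ay * Real.log (q ay / ∑ y, q (ay.1, y))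

/-- Summing `pushf p f` against a function of the first coordinate pulled back. -/
lemma sum_pushf_mul {S T U : Type*} [Fintype S] [Fintype T] [Fintype U]
    (p : S × T → ℝ) (f : S → U) (L : U → T → ℝ) :
    ∑ uy : U × T, pushf p f uy * L uy.1 uy.2
      = ∑ xy : S × T, p xy * L (f xy.1) xy.2 := by
  classical
  rw [Fintype.sum_prod_type, Fintype.sum_prod_type, Finset.sum_comm (γ := S),
    Finset.sum_comm (γ := U)]
  refine Finset.sum_congr rfl fun y _ => ?_
  have : ∀ u : U, pushf p f (u, y) * L u y
      = ∑ x ∈ Finset.univ.filter (fun x => f x = u), p (x, y) * L (f x) y := by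
    intro u
    rw [pushf, Finset.sum_mul]
    exact Finset.sum_congr rfl fun x hx => by
      rw [(Finset.mem_filter.1 hx).2]
  simp_rw [this]
  exact Finset.sum_fiberwise _ _ _

/-- Equality in the data-processing inequality for conditional entropy holds iff the
conditional distribution of `Y` given `X = x` coincides with the conditional
distribution of `Y` given `f(X) = f x`, for every `x` of positive marginal. -/
theorem condEnt_pushforward_eq_iff {S T U : Type*} [Fintype S] [Fintype T] [Fintype U]
    (p : S × T → ℝ)
    (hp0 : ∀ xy, 0 ≤ p xy) (hp1 : ∑ xy, p xy = 1)
    (f : S → U) :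
    condEnt (pushf p f) = condEnt p ↔
      ∀ x, 0 < (∑ y, p (x, y)) → ∀ y,
        p (x, y) / (∑ y', p (x, y')) =
          pushf p f (f x, y) / ∑ y', pushf p f (f x, y') := by
  classical
  set q : U × T → ℝ := pushf p f with hq
  set P1 : S → ℝ := fun x => ∑ y, p (x, y) with hP1
  set Q1 : U → ℝ := fun u => ∑ y, q (u, y) with hQ1
  have hq0 : ∀ uy, 0 ≤ q uy := fun uy => Finset.sum_nonneg fun x _ => hp0 _
  have hple : ∀ x y, p (x, y) ≤ q (f x, y) := by
    intro x y
    refine Finset.single_le_sum (f := fun x' => p (x', y)) (fun i _ => hp0 _) ?_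
    simp
  have hpP1 : ∀ x y, p (x, y) ≤ P1 x := fun x y =>
    Finset.single_le_sum (fun i _ => hp0 _) (Finset.mem_univ y)
  have hP1le : ∀ x, P1 x ≤ Q1 (f x) := fun x => Finset.sum_le_sum fun y _ => hple x y
  have hP1nn : ∀ x, 0 ≤ P1 x := fun x => Finset.sum_nonneg fun y _ => hp0 _
  have hQ1nn : ∀ u, 0 ≤ Q1 u := fun u => Finset.sum_nonneg fun y _ => hq0 _
  have hsum1 : ∑ x, P1 x = 1 := by rw [← hp1, Fintype.sum_prod_type]
  -- the support of p
  set Sp : Finset (S × T) := Finset.univ.filter (fun xy : S × T => 0 < p xy) with hSp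
  -- identity: condEnt q rewritten as a sum over the support of p
  have hident : condEnt q
      = -∑ xy ∈ Sp, p xy * Real.log (q (f xy.1, xy.2) / Q1 (f xy.1)) := by
    have h1 : ∑ uy ∈ Finset.univ.filter (fun uy : U × T => 0 < q uy),
        q uy * Real.log (q uy / Q1 uy.1)
        = ∑ uy : U × T, q uy * Real.log (q uy / Q1 uy.1) := by
      refine Finset.sum_subset (Finset.filter_subset _ _) fun uy _ h => ?_
      have : q uy = 0 := le_antisymm (not_lt.1 (by simpa using h)) (hq0 uy)
      simp [this]
    have h2 : ∑ uy : U × T, q uy * Real.log (q uy / Q1 uy.1)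
        = ∑ xy : S × T, p xy * Real.log (q (f xy.1, xy.2) / Q1 (f xy.1)) :=
      sum_pushf_mul p f (fun u y => Real.log (q (u, y) / Q1 u))
    have h3 : ∑ xy : S × T, p xy * Real.log (q (f xy.1, xy.2) / Q1 (f xy.1))
        = ∑ xy ∈ Sp, p xy * Real.log (q (f xy.1, xy.2) / Q1 (f xy.1)) := by
      refine (Finset.sum_subset (Finset.filter_subset _ _) fun xy _ h => ?_).symm
      have : p xy = 0 := le_antisymm (not_lt.1 (by simpa [hSp] using h)) (hp0 xy)
      simp [this]
    rw [condEnt, h1, h2, h3]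
  have hcp : condEnt p = -∑ xy ∈ Sp, p xy * Real.log (p xy / P1 xy.1) := rfl
  constructor
  · -- hard direction
    intro hEq x hx y
    -- positivity facts
    have hQ1x : 0 < Q1 (f x) := lt_of_lt_of_le hx (hP1le x)
    -- the difference rewritten
    have hD : ∑ xy ∈ Sp, p xy *
        (Real.log (p xy / P1 xy.1) - Real.log (q (f xy.1, xy.2) / Q1 (f xy.1))) = 0 := by
      have := hEq
      rw [hident, hcp] at this
      simp_rw [mul_sub]
      rw [Finset.sum_sub_distrib]
      linarith [this]
    -- termwise bound: t xy ≥ g xy on Sp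
    set g : S × T → ℝ := fun xy => p xy - P1 xy.1 * (q (f xy.1, xy.2) / Q1 (f xy.1)) with hg
    set t : S × T → ℝ := fun xy => p xy *
        (Real.log (p xy / P1 xy.1) - Real.log (q (f xy.1, xy.2) / Q1 (f xy.1))) with ht
    have key : ∀ xy ∈ Sp, g xy ≤ t xy ∧
        (t xy = g xy → p xy / P1 xy.1 = q (f xy.1, xy.2) / Q1 (f xy.1)) := by
      intro xy hxy
      obtain ⟨x', y'⟩ := xy
      have hpxy : 0 < p (x', y') := (Finset.mem_filter.1 hxy).2
      have hP1x : 0 < P1 x' := lt_of_lt_of_le hpxy (hpP1 x' y')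
      have hqxy : 0 < q (f x', y') := lt_of_lt_of_le hpxy (hple x' y')
      have hQ1fx : 0 < Q1 (f x') := lt_of_lt_of_le hP1x (hP1le x')
      have ha : 0 < p (x', y') / P1 x' := div_pos hpxy hP1x
      have hb : 0 < q (f x', y') / Q1 (f x') := div_pos hqxy hQ1fx
      set c : ℝ := (q (f x', y') / Q1 (f x')) / (p (x', y') / P1 x') with hc
      have hcpos : 0 < c := div_pos hb ha
      have hlog : Real.log (p (x', y') / P1 x') - Real.log (q (f x', y') / Q1 (f x'))
          = -Real.log c := by
        rw [hc, Real.log_div (ne_of_gt hb) (ne_of_gt ha)]; ring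
      have hgt : g (x', y') = p (x', y') * (1 - c) := by
        simp only [hg, hc]
        field_simp
      constructor
      · show g (x', y') ≤ p (x', y') *
          (Real.log (p (x', y') / P1 x') - Real.log (q (f x', y') / Q1 (f x')))
        rw [hlog, hgt]
        have := Real.log_le_sub_one_of_pos hcpos
        nlinarith [hpxy]
      · intro hteq
        replace hteq : p (x', y') *
            (Real.log (p (x', y') / P1 x') - Real.log (q (f x', y') / Q1 (f x')))
            = g (x', y') := hteq
        rw [hlog, hgt] at hteq
        have hlc : Real.log c = c - 1 := by
          have h' : p (x', y') * (-Real.log c) = p (x', y') * (1 - c) := hteq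
          have := mul_left_cancel₀ (ne_of_gt hpxy) h'
          linarith
        have hc1 : c = 1 := by
          by_contra hne
          exact absurd hlc (ne_of_lt (Real.log_lt_sub_one_of_pos hcpos hne))
        show p (x', y') / P1 x' = q (f x', y') / Q1 (f x')
        have := hc1
        rw [hc] at this
        field_simp at this ⊢
        linarith [this]
    -- sum over all of g is zero
    have hsumg : ∑ xy : S × T, g xy = 0 := by
      have h1 : ∑ xy : S × T, g xy
          = 1 - ∑ x', P1 x' * (Q1 (f x') / Q1 (f x')) := by
        rw [hg]
        simp only
        rw [Finset.sum_sub_distrib, hp1, Fintype.sum_prod_type]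
        congr 1
        refine Finset.sum_congr rfl fun x' _ => ?_
        show ∑ y, P1 x' * (q (f x', y) / Q1 (f x')) = P1 x' * (Q1 (f x') / Q1 (f x'))
        rw [← Finset.mul_sum, ← Finset.sum_div]
      rw [h1]
      have h2 : ∀ x', P1 x' * (Q1 (f x') / Q1 (f x')) = P1 x' := by
        intro x'
        rcases eq_or_lt_of_le (hP1nn x') with h | h
        · rw [← h]; ring
        · rw [div_self (ne_of_gt (lt_of_lt_of_le h (hP1le x'))), mul_one]
      simp_rw [h2]
      rw [hsum1]; ring
    -- g ≤ 0 off the support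
    have hgnpos : ∀ xy ∈ Finset.univ.filter (fun xy : S × T => ¬ 0 < p xy), g xy ≤ 0 := by
      intro xy hxy
      have hp0' : p xy = 0 :=
        le_antisymm (not_lt.1 (Finset.mem_filter.1 hxy).2) (hp0 xy)
      rw [hg]
      simp only [hp0']
      have : 0 ≤ P1 xy.1 * (q (f xy.1, xy.2) / Q1 (f xy.1)) :=
        mul_nonneg (hP1nn _) (div_nonneg (hq0 _) (hQ1nn _))
      linarith
    have hsplit : ∑ xy ∈ Sp, g xy + ∑ xy ∈ Finset.univ.filter
        (fun xy : S × T => ¬ 0 < p xy), g xy = ∑ xy : S × T, g xy :=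
      Finset.sum_filter_add_sum_filter_not _ _ _
    have hA : 0 ≤ ∑ xy ∈ Sp, (t xy - g xy) :=
      Finset.sum_nonneg fun xy hxy => sub_nonneg.2 (key xy hxy).1
    have hB : 0 ≤ -∑ xy ∈ Finset.univ.filter (fun xy : S × T => ¬ 0 < p xy), g xy := by
      have := Finset.sum_nonpos hgnpos
      linarith
    have hSpg : ∑ xy ∈ Sp, g xy
        = -∑ xy ∈ Finset.univ.filter (fun xy : S × T => ¬ 0 < p xy), g xy := by
      linarith [hsplit, hsumg]
    have hsumt : ∑ xy ∈ Sp, t xy = 0 := hD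
    have hsumtg : ∑ xy ∈ Sp, (t xy - g xy) = ∑ xy ∈ Sp, t xy - ∑ xy ∈ Sp, g xy :=
      Finset.sum_sub_distrib _ _
    -- both nonneg pieces must vanish
    have hAB : ∑ xy ∈ Sp, (t xy - g xy) + (-∑ xy ∈ Finset.univ.filter
        (fun xy : S × T => ¬ 0 < p xy), g xy) = 0 := by
      rw [hsumtg, hsumt, hSpg]; ring
    have hA0 : ∑ xy ∈ Sp, (t xy - g xy) = 0 := by linarith
    have hB0 : ∑ xy ∈ Finset.univ.filter (fun xy : S × T => ¬ 0 < p xy), g xy = 0 := by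
      linarith
    -- termwise conclusions
    have htg : ∀ xy ∈ Sp, t xy = g xy := by
      intro xy hxy
      have := (Finset.sum_eq_zero_iff_of_nonneg
        (fun xy hxy => sub_nonneg.2 (key xy hxy).1)).1 hA0 xy hxy
      linarith [this]
    have hg0 : ∀ xy ∈ Finset.univ.filter (fun xy : S × T => ¬ 0 < p xy), g xy = 0 := by
      intro xy hxy
      exact (Finset.sum_eq_zero_iff_of_nonpos hgnpos).1 hB0 xy hxy
    -- finish: case on whether p (x, y) > 0
    by_cases hpxy : 0 < p (x, y)
    · exact (key (x, y) (Finset.mem_filter.2 ⟨Finset.mem_univ _, hpxy⟩)).2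
        (htg (x, y) (Finset.mem_filter.2 ⟨Finset.mem_univ _, hpxy⟩))
    · have hmem : (x, y) ∈ Finset.univ.filter (fun xy : S × T => ¬ 0 < p xy) :=
        Finset.mem_filter.2 ⟨Finset.mem_univ _, hpxy⟩
      have hp0' : p (x, y) = 0 := le_antisymm (not_lt.1 hpxy) (hp0 _)
      have := hg0 (x, y) hmem
      rw [hg] at this
      simp only [hp0'] at this ⊢
      have hb0 : q (f x, y) / Q1 (f x) = 0 := by
        have hx' : P1 x ≠ 0 := ne_of_gt hx
        have : P1 x * (q (f x, y) / Q1 (f x)) = 0 := by linarith [this]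
        exact (mul_eq_zero.1 this).resolve_left hx'
      rw [zero_div, hb0]
  · -- easy direction
    intro h
    rw [hident, hcp]
    congr 1
    refine Finset.sum_congr rfl fun xy hxy => ?_
    have hpxy : 0 < p xy := (Finset.mem_filter.1 hxy).2
    have hP1x : 0 < P1 xy.1 := lt_of_lt_of_le hpxy (hpP1 xy.1 xy.2)
    have := h xy.1 hP1x xy.2
    rw [this]
end

section
/- Let S, T, U, U' be finite types, let p be a joint pmf on S × T with marginal p₁(x) = ∑_y p(x,y), and let f : S → U satisfy the sufficiency condition: for every x with p₁(x) > 0 and every y, p(x,y)/p₁(x) = p_f(f x, y)/(p_f)₁(f x), where p_f(u,y) = ∑_{x : f x = u} p(x,y). Then f is a global minimizer of the predictor loss among all deterministic rationalization schemes: H_{p_f}(Y | f(X)) = H_p(Y | X), and for every g : S → U', H_{p_f}(Y | f(X)) ≤ H_{p_g}(Y | g(X)), where p_g(u',y) = ∑_{x : g x = u'} p(x,y). -/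
open scoped Classical

lemma condEnt_eq_sum {A T : Type*} [Fintype A] [Fintype T] (q : A × T → ℝ)
    (hq : ∀ ay, 0 ≤ q ay) :
    condEnt q = -∑ ay : A × T, q ay * Real.log (q ay / ∑ y, q (ay.1, y)) := by
  unfold condEnt
  congr 1
  apply Finset.sum_subset (Finset.filter_subset _ _)
  intro ay _ hay
  simp only [Finset.mem_filter, Finset.mem_univ, true_and, not_lt] at hay
  have : q ay = 0 := le_antisymm hay (hq ay)
  simp [this]

lemma pushf_nonneg {S T U : Type*} [Fintype S] (p : S × T → ℝ)
    (hp0 : ∀ xy, 0 ≤ p xy) (g : S → U) : ∀ uy, 0 ≤ pushf p g uy :=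
  fun _ => Finset.sum_nonneg fun _ _ => hp0 _

lemma le_pushf {S T U : Type*} [Fintype S] (p : S × T → ℝ)
    (hp0 : ∀ xy, 0 ≤ p xy) (g : S → U) (x : S) (y : T) :
    p (x, y) ≤ pushf p g (g x, y) := by
  have hx : x ∈ Finset.univ.filter (fun x' => g x' = g x) := by simp
  exact Finset.single_le_sum (f := fun x' => p (x', y)) (fun _ _ => hp0 _) hx

/-- The conditional entropy of a pushforward, rewritten as a sum over the original space. -/
lemma condEnt_pushf {S T U : Type*} [Fintype S] [Fintype T] [Fintype U]
    (p : S × T → ℝ) (hp0 : ∀ xy, 0 ≤ p xy) (g : S → U) :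
    condEnt (pushf p g) =
      -∑ xy : S × T, p xy *
        Real.log (pushf p g (g xy.1, xy.2) / ∑ y, pushf p g (g xy.1, y)) := by
  rw [condEnt_eq_sum _ (pushf_nonneg p hp0 g)]
  congr 1
  conv_lhs => rw [Fintype.sum_prod_type, Finset.sum_comm]
  conv_rhs => rw [Fintype.sum_prod_type, Finset.sum_comm]
  apply Finset.sum_congr rfl
  intro y _
  have : ∀ u : U,
      (∑ x ∈ Finset.univ.filter (fun x => g x = u), p (x, y)) *
        Real.log (pushf p g (u, y) / ∑ y', pushf p g (u, y')) =
      ∑ x ∈ Finset.univ.filter (fun x => g x = u),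
        p (x, y) * Real.log (pushf p g (g x, y) / ∑ y', pushf p g (g x, y')) := by
    intro u
    rw [Finset.sum_mul]
    apply Finset.sum_congr rfl
    intro x hx
    simp only [Finset.mem_filter] at hx
    rw [hx.2]
  calc ∑ u : U, pushf p g (u, y) * Real.log (pushf p g (u, y) / ∑ y', pushf p g (u, y'))
      = ∑ u : U, ∑ x ∈ Finset.univ.filter (fun x => g x = u),
          p (x, y) * Real.log (pushf p g (g x, y) / ∑ y', pushf p g (g x, y')) := by
        apply Finset.sum_congr rfl; intro u _; rw [← this u]; rfl
    _ = ∑ x : S, p (x, y) * Real.log (pushf p g (g x, y) / ∑ y', pushf p g (g x, y')) :=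
        Finset.sum_fiberwise _ _ _

/-- Gibbs-type inequality: coarse-graining the conditioning variable cannot decrease
conditional entropy. -/
lemma condEnt_le_condEnt_pushf {S T U : Type*} [Fintype S] [Fintype T] [Fintype U]
    (p : S × T → ℝ) (hp0 : ∀ xy, 0 ≤ p xy) (hp1 : ∑ xy, p xy = 1) (g : S → U) :
    condEnt p ≤ condEnt (pushf p g) := by
  rw [condEnt_eq_sum p hp0, condEnt_pushf p hp0 g]
  rw [neg_le_neg_iff]
  rw [← sub_nonneg, ← Finset.sum_sub_distrib]
  have key : ∀ xy : S × T,
      p xy - (∑ y', p (xy.1, y')) *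
          (pushf p g (g xy.1, xy.2) / ∑ y', pushf p g (g xy.1, y')) ≤
      p xy * Real.log (p xy / ∑ y, p (xy.1, y)) -
        p xy * Real.log (pushf p g (g xy.1, xy.2) / ∑ y, pushf p g (g xy.1, y)) := by
    rintro ⟨x, y⟩
    dsimp only
    set P1 := ∑ y', p (x, y') with hP1
    set Q := pushf p g (g x, y) with hQ
    set Q1 := ∑ y', pushf p g (g x, y') with hQ1
    have hP1nn : 0 ≤ P1 := Finset.sum_nonneg fun _ _ => hp0 _
    have hQnn : 0 ≤ Q := pushf_nonneg p hp0 g _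
    have hQ1nn : 0 ≤ Q1 := Finset.sum_nonneg fun _ _ => pushf_nonneg p hp0 g _
    rcases eq_or_lt_of_le (hp0 (x, y)) with hpz | hpp
    · rw [← hpz]
      simp only [zero_mul, sub_zero, zero_sub, neg_nonpos]
      have : 0 ≤ Q / Q1 := div_nonneg hQnn hQ1nn
      nlinarith
    · -- p (x,y) > 0
      have hP1pos : 0 < P1 := lt_of_lt_of_le hpp (Finset.single_le_sum (fun _ _ => hp0 _) (Finset.mem_univ y))
      have hQpos : 0 < Q := lt_of_lt_of_le hpp (le_pushf p hp0 g x y)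
      have hP1leQ1 : P1 ≤ Q1 := Finset.sum_le_sum fun y' _ => le_pushf p hp0 g x y'
      have hQ1pos : 0 < Q1 := lt_of_lt_of_le hP1pos hP1leQ1
      have hApos : 0 < p (x, y) / P1 := div_pos hpp hP1pos
      have hBpos : 0 < Q / Q1 := div_pos hQpos hQ1pos
      have hlog : Real.log ((Q / Q1) / (p (x, y) / P1)) ≤ (Q / Q1) / (p (x, y) / P1) - 1 :=
        Real.log_le_sub_one_of_pos (div_pos hBpos hApos)
      rw [Real.log_div (ne_of_gt hBpos) (ne_of_gt hApos)] at hlog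
      have hdiv : (Q / Q1) / (p (x, y) / P1) = P1 * (Q / Q1) / p (x, y) := by
        field_simp
    -- multiply hlog by p (x,y) > 0
      have h2 : p (x, y) * (Real.log (Q / Q1) - Real.log (p (x, y) / P1)) ≤
          p (x, y) * ((Q / Q1) / (p (x, y) / P1) - 1) :=
        mul_le_mul_of_nonneg_left hlog (le_of_lt hpp)
      rw [hdiv] at h2
      have h3 : p (x, y) * (P1 * (Q / Q1) / p (x, y) - 1) = P1 * (Q / Q1) - p (x, y) := by
        field_simp
      rw [h3] at h2
      linarith [h2]
  calc (0 : ℝ) = 1 - 1 := by ring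
    _ ≤ ∑ xy : S × T, (p xy - (∑ y', p (xy.1, y')) *
          (pushf p g (g xy.1, xy.2) / ∑ y', pushf p g (g xy.1, y'))) := by
        rw [Finset.sum_sub_distrib, hp1]
        have : ∑ xy : S × T, (∑ y', p (xy.1, y')) *
            (pushf p g (g xy.1, xy.2) / ∑ y', pushf p g (g xy.1, y')) ≤ 1 := by
          rw [Fintype.sum_prod_type]
          rw [← hp1, Fintype.sum_prod_type]
          apply Finset.sum_le_sum
          intro x _
          show ∑ y : T, (∑ y', p (x, y')) *
              (pushf p g (g x, y) / ∑ y', pushf p g (g x, y')) ≤ ∑ y, p (x, y)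
          rcases eq_or_ne (∑ y', pushf p g (g x, y')) 0 with hz | hnz
          · simp only [hz, div_zero, mul_zero, Finset.sum_const_zero]
            exact Finset.sum_nonneg fun _ _ => hp0 _
          · rw [← Finset.mul_sum, ← Finset.sum_div, div_self hnz, mul_one]
        linarith
    _ ≤ _ := Finset.sum_le_sum fun xy _ => key xy

/-- A rationalization scheme `f` satisfying the sufficiency condition is a global
minimizer of the predictor loss (equivalently of the conditional entropy): it
achieves `H(Y|f(X)) = H(Y|X)` and beats every other deterministic scheme `g`. -/
theorem sufficiency_global_min {S T U U' : Type*}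
    [Fintype S] [Fintype T] [Fintype U] [Fintype U']
    (p : S × T → ℝ)
    (hp0 : ∀ xy, 0 ≤ p xy) (hp1 : ∑ xy, p xy = 1)
    (f : S → U)
    (hsuff : ∀ x, 0 < (∑ y, p (x, y)) → ∀ y,
      p (x, y) / (∑ y', p (x, y')) =
        pushf p f (f x, y) / ∑ y', pushf p f (f x, y')) :
    condEnt (pushf p f) = condEnt p ∧
      ∀ g : S → U', condEnt (pushf p f) ≤ condEnt (pushf p g) := by
  have heq : condEnt (pushf p f) = condEnt p := by
    rw [condEnt_pushf p hp0 f, condEnt_eq_sum p hp0]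
    congr 1
    apply Finset.sum_congr rfl
    rintro ⟨x, y⟩ _
    dsimp only
    rcases eq_or_lt_of_le (hp0 (x, y)) with hpz | hpp
    · rw [← hpz]; ring
    · have hP1pos : 0 < ∑ y', p (x, y') :=
        lt_of_lt_of_le hpp (Finset.single_le_sum (fun _ _ => hp0 _) (Finset.mem_univ y))
      rw [← hsuff x hP1pos y]
  exact ⟨heq, fun g => heq ▸ condEnt_le_condEnt_pushf p hp0 hp1 g⟩
end
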